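/- (Marginal of the symmetric-subspace cloner) Let Π_sym be the projector onto the symmetric subspace of (ℂ^d)^{⊗n}, and define the channel E(ρ) = (d / d(n)) Π_sym (ρ ⊗ I^{⊗(n−1)}) Π_sym, where d(n) = C(d+n−1, n) is the dimension of the symmetric subspace. Then E is trace-preserving, covariant under U ↦ U^{⊗n} for all unitaries U on ℂ^d, and its single-site marginal is Tr_{all but site i}(E(ρ)) = c_n ρ + (1 − c_n) I/d with c_n = (d + n)/(n(d + 1)). -/

import Mathlib

set_option linter.unusedSectionVars false
set_option linter.unusedVariables false
set_option maxHeartbeats 1000000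

open Matrix Kronecker
open scoped ComplexOrder

/-- Time evolution unitary `e^{-iHt}`. -/
noncomputable def timeEvo {ι : Type} [Fintype ι] [DecidableEq ι]
    (H : Matrix ι ι ℂ) (t : ℝ) : Matrix ι ι ℂ :=
  NormedSpace.exp ((-(Complex.I * (t : ℂ))) • H)

/-- Conjugation `U M U†`. -/
noncomputable def uconj {ι : Type} [Fintype ι] (U M : Matrix ι ι ℂ) : Matrix ι ι ℂ :=
  U * M * Uᴴ

/-- A density operator: positive semidefinite with unit trace. -/
noncomputable def IsState {ι : Type} [Fintype ι] (ρ : Matrix ι ι ℂ) : Prop :=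
  ρ.PosSemidef ∧ ρ.trace = 1

/-- Choi matrix of a linear map. -/
noncomputable def choi {ι κ : Type} [Fintype ι] [DecidableEq ι] [Fintype κ]
    (E : Matrix ι ι ℂ →ₗ[ℂ] Matrix κ κ ℂ) : Matrix (ι × κ) (ι × κ) ℂ :=
  fun p q => E (Matrix.single p.1 q.1 1) p.2 q.2

/-- A quantum channel: completely positive (positive semidefinite Choi matrix)
and trace preserving. -/
noncomputable def IsCPTP {ι κ : Type} [Fintype ι] [DecidableEq ι] [Fintype κ]
    (E : Matrix ι ι ℂ →ₗ[ℂ] Matrix κ κ ℂ) : Prop :=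
  (choi E).PosSemidef ∧ ∀ M : Matrix ι ι ℂ, (E M).trace = M.trace

/-- Partial trace over the second (right) tensor factor. -/
noncomputable def ptraceRight {ι κ : Type} [Fintype ι] [Fintype κ]
    (M : Matrix (ι × κ) (ι × κ) ℂ) : Matrix ι ι ℂ :=
  fun i j => ∑ k, M (i, k) (j, k)

/-- Partial trace over the first (left) tensor factor. -/
noncomputable def ptraceLeft {ι κ : Type} [Fintype ι] [Fintype κ]
    (M : Matrix (ι × κ) (ι × κ) ℂ) : Matrix κ κ ℂ :=
  fun i j => ∑ k, M (k, i) (k, j)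

/-- Positive semidefinite square root, extended by `0` to non-PSD matrices. -/
noncomputable def msqrt {ι : Type} [Fintype ι] [DecidableEq ι]
    (M : Matrix ι ι ℂ) : Matrix ι ι ℂ :=
  @dite _ M.PosSemidef (Classical.propDecidable _) (fun h => h.1.eigenvectorUnitary * diagonal ((RCLike.ofReal : ℝ → ℂ) ∘ (√·) ∘ h.1.eigenvalues) *
    (star h.1.eigenvectorUnitary : Matrix ι ι ℂ)) (fun _ => 0)

/-- Trace norm `‖M‖₁ = Tr √(M†M)`. -/
noncomputable def traceNorm {ι : Type} [Fintype ι] [DecidableEq ι]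
    (M : Matrix ι ι ℂ) : ℝ :=
  (msqrt (Mᴴ * M)).trace.re

/-- Uhlmann fidelity `Fid(σ,τ) = ‖√σ√τ‖₁`. -/
noncomputable def Fid {ι : Type} [Fintype ι] [DecidableEq ι]
    (σ τ : Matrix ι ι ℂ) : ℝ :=
  traceNorm (msqrt σ * msqrt τ)

/-- Rank-one projector `|v⟩⟨v|` of a vector. -/
noncomputable def proj {ι : Type} (v : ι → ℂ) : Matrix ι ι ℂ :=
  Matrix.vecMulVec v (star v)

/-- The asymmetry monotone `f_t(ρ) = 1 - Fid(ρ, e^{-iHt} ρ e^{iHt})`. -/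
noncomputable def ft {ι : Type} [Fintype ι] [DecidableEq ι]
    (H : Matrix ι ι ℂ) (t : ℝ) (ρ : Matrix ι ι ℂ) : ℝ :=
  1 - Fid ρ (uconj (timeEvo H t) ρ)


/-- Permutation operator on `(ℂ^d)^{⊗n}`. -/
noncomputable def permMat {n d : ℕ} (π : Equiv.Perm (Fin n)) :
    Matrix (Fin n → Fin d) (Fin n → Fin d) ℂ :=
  fun f g => if (fun i => g (π i)) = f then 1 else 0

/-- Projector onto the symmetric subspace of `(ℂ^d)^{⊗n}`,
`Π_sym = (1/n!) Σ_π V_π`. -/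
noncomputable def symProj (n d : ℕ) : Matrix (Fin n → Fin d) (Fin n → Fin d) ℂ :=
  ((n.factorial : ℂ))⁻¹ • ∑ π : Equiv.Perm (Fin n), permMat π

/-- `ρ ⊗ I^{⊗(n−1)}`: `ρ` at the first site, identity elsewhere. -/
noncomputable def firstSite {n d : ℕ} [NeZero n] (ρ : Matrix (Fin d) (Fin d) ℂ) :
    Matrix (Fin n → Fin d) (Fin n → Fin d) ℂ :=
  fun f g => ρ (f 0) (g 0) *
    ∏ i ∈ Finset.univ.erase (0 : Fin n), (if f i = g i then (1 : ℂ) else 0)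

/-- The Keyl–Werner universal cloner
`E(ρ) = (d/d(n)) Π_sym (ρ ⊗ I^{⊗(n−1)}) Π_sym` with `d(n) = C(d+n−1, n)`. -/
noncomputable def cloner (n d : ℕ) [NeZero n] (ρ : Matrix (Fin d) (Fin d) ℂ) :
    Matrix (Fin n → Fin d) (Fin n → Fin d) ℂ :=
  ((d : ℂ) / (Nat.choose (d + n - 1) n : ℂ)) • (symProj n d * firstSite ρ * symProj n d)

/-- Single-site marginal (partial trace over all sites except `i`). -/
noncomputable def siteMarginal {n d : ℕ} (i : Fin n)
    (M : Matrix (Fin n → Fin d) (Fin n → Fin d) ℂ) : Matrix (Fin d) (Fin d) ℂ :=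
  fun a b => ∑ f : Fin n → Fin d, if f i = a then M f (Function.update f i b) else 0

/-- `U^{⊗n}`. -/
noncomputable def kronPow {n d : ℕ} (U : Matrix (Fin d) (Fin d) ℂ) :
    Matrix (Fin n → Fin d) (Fin n → Fin d) ℂ :=
  fun f g => ∏ i, U (f i) (g i)


namespace ClonerAux
open Equiv Finset

variable {α : Type*} [DecidableEq α] [Fintype α]

lemma pow_mul_fix (π : Equiv.Perm α) {x : α} {P : ℕ} (hP : (π ^ P) x = x) :
    ∀ k, (π ^ (k * P)) x = x := by
  intro k
  induction k with
  | zero => simp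
  | succ k ih => rw [Nat.succ_mul, pow_add, Equiv.Perm.mul_apply, hP, ih]

lemma pow_mod_fix (π : Equiv.Perm α) {x : α} {P : ℕ} (hP : (π ^ P) x = x) (s : ℕ) :
    (π ^ s) x = (π ^ (s % P)) x := by
  conv_lhs => rw [← Nat.mod_add_div s P]
  rw [pow_add, Equiv.Perm.mul_apply, mul_comm, pow_mul_fix π hP]

lemma fix_apply_fix (π : Equiv.Perm α) {x : α} {P : ℕ} (hP : (π ^ P) x = x) :
    (π ^ P) (π x) = π x := by
  have : (π ^ P) (π x) = π ((π ^ P) x) := by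
    rw [← Equiv.Perm.mul_apply, ← Equiv.Perm.mul_apply, ← pow_succ, ← pow_succ']
  rw [this, hP]

lemma reach_le (π : Equiv.Perm α) {x y : α} {T : ℕ} (hT : (π ^ (T + 1)) x = x)
    (h : π.SameCycle x y) : ∃ r ≤ T, (π ^ (r + 1)) x = y := by
  obtain ⟨s, hs0, _, hsx⟩ := h.exists_pow_eq''
  refine ⟨(s - 1) % (T + 1), Nat.le_of_lt_succ (Nat.mod_lt _ (Nat.succ_pos _)), ?_⟩
  have h1 : s = (s - 1) + 1 := (Nat.succ_pred_eq_of_pos hs0).symm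
  have hfix : (π ^ (T + 1)) (π x) = π x := fix_apply_fix π hT
  calc (π ^ ((s - 1) % (T + 1) + 1)) x = (π ^ ((s - 1) % (T + 1))) (π x) := by
        rw [pow_succ, Equiv.Perm.mul_apply]
    _ = (π ^ (s - 1)) (π x) := (pow_mod_fix π hfix _).symm
    _ = (π ^ s) x := by conv_rhs => rw [h1, pow_succ, Equiv.Perm.mul_apply]
    _ = y := hsx

lemma sc_nat {π : Equiv.Perm α} {x y : α} (h : π.SameCycle x y) : ∃ t : ℕ, (π ^ t) x = y := by
  obtain ⟨t, _, ht⟩ := h.exists_pow_eq'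
  exact ⟨t, ht⟩

lemma inv_eq_of_sameCycle {β : Type*} {π : Equiv.Perm α} {f : α → β}
    (hf : ∀ m, f (π m) = f m) {x y : α} (h : π.SameCycle x y) : f y = f x := by
  obtain ⟨t, ht⟩ := sc_nat h
  subst ht
  clear h
  induction t with
  | zero => simp
  | succ t ih => rw [pow_succ', Equiv.Perm.mul_apply, hf, ih]

lemma exists_ret (π : Equiv.Perm α) (x : α) : ∃ t : ℕ, (π ^ (t + 1)) x = x := by
  refine ⟨orderOf π - 1, ?_⟩
  have h1 : orderOf π - 1 + 1 = orderOf π := Nat.succ_pred_eq_of_pos (orderOf_pos π)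
  rw [h1, pow_orderOf_eq_one]; rfl

lemma inv_of_almost {β : Type*} (π : Equiv.Perm α) (z : α) (f : α → β)
    (h : ∀ m, π m ≠ z → f m = f (π m)) : ∀ m, f (π m) = f m := by
  classical
  have hex := exists_ret π z
  set T := Nat.find hex with hTdef
  have hspec : (π ^ (T + 1)) z = z := Nat.find_spec hex
  have hchain : ∀ s ≤ T, f ((π ^ s) z) = f z := by
    intro s hs
    induction s with
    | zero => simp
    | succ s ih =>
      have hlt : s < T := hs
      have hne : π ((π ^ s) z) ≠ z := by
        rw [← Equiv.Perm.mul_apply, ← pow_succ']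
        exact fun hc => Nat.find_min hex hlt hc
      rw [pow_succ', Equiv.Perm.mul_apply, ← h _ hne]
      exact ih (Nat.le_of_lt hlt)
  intro m
  by_cases hm : π m = z
  · have hzm : m = (π ^ T) z := by
      apply π.injective
      rw [hm, ← Equiv.Perm.mul_apply, ← pow_succ']
      exact hspec.symm
    rw [hm, hzm, hchain T le_rfl]
  · exact (h m hm).symm

/-! ## first-hit pattern -/

section Pat

variable (π : Equiv.Perm α) (i j : α)

/-- hitting predicate -/
def hitP (m : α) (t : ℕ) : Prop := (π ^ (t + 1)) m = j ∨ (π ^ (t + 1)) m = i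

instance (m : α) : DecidablePred (hitP π i j m) := fun t => by unfold hitP; infer_instance

lemma hitEx {m : α} (hsc : π.SameCycle i j) (hm : π.SameCycle i m) : ∃ t, hitP π i j m t := by
  obtain ⟨s, hs0, _, hs⟩ := (hm.symm.trans hsc).exists_pow_eq''
  refine ⟨s - 1, Or.inl ?_⟩
  have h1 : s - 1 + 1 = s := by omega
  rwa [h1]

variable {β : Type*} (a b : β)

/-- the rigid pattern on the orbit of `i` (junk value `a` off it) -/
noncomputable def patv (m : α) : β :=
  @dite _ (∃ t, hitP π i j m t) (Classical.propDecidable _)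
    (fun h => if (π ^ (Nat.find h + 1)) m = j then a else b) (fun _ => a)

variable {π i j}

lemma patv_of_ex {m : α} (h : ∃ t, hitP π i j m t) :
    patv π i j a b m = if (π ^ (Nat.find h + 1)) m = j then a else b := by
  rw [patv, dif_pos h]

lemma patv_hit_j {m : α} (hsc : π.SameCycle i j) (hm : π.SameCycle i m) (hj : π m = j) :
    patv π i j a b m = a := by
  have hex : ∃ t, hitP π i j m t := ⟨0, Or.inl (by simpa using hj)⟩
  rw [patv_of_ex a b hex, if_pos]
  have h0 : Nat.find hex = 0 := Nat.eq_zero_of_le_zero (Nat.find_le (Or.inl (by simpa [hitP] using hj)))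
  rw [h0]; simpa using hj

lemma patv_hit_i {m : α} (hsc : π.SameCycle i j) (hm : π.SameCycle i m) (hi : π m = i)
    (hij : π m ≠ j) : patv π i j a b m = b := by
  have hex : ∃ t, hitP π i j m t := ⟨0, Or.inr (by simpa using hi)⟩
  rw [patv_of_ex a b hex, if_neg]
  have h0 : Nat.find hex = 0 := Nat.eq_zero_of_le_zero (Nat.find_le (Or.inr (by simpa using hi)))
  rw [h0]; simpa using hij

lemma find_step {m : α} (hex : ∃ t, hitP π i j m t) (hex' : ∃ t, hitP π i j (π m) t)
    (h1 : π m ≠ i) (h2 : π m ≠ j) : Nat.find hex = Nat.find hex' + 1 := by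
  have hnot0 : ¬ hitP π i j m 0 := by
    unfold hitP; push_neg; simpa using ⟨h2, h1⟩
  have hpos : 0 < Nat.find hex := by
    rcases Nat.pos_of_ne_zero (fun h0 => hnot0 (h0 ▸ Nat.find_spec hex)) with h; exact h
  have hshift : ∀ t, hitP π i j (π m) t ↔ hitP π i j m (t + 1) := by
    intro t
    unfold hitP
    rw [show (π ^ (t + 1 + 1)) m = (π ^ (t + 1)) (π m) by rw [pow_succ, Equiv.Perm.mul_apply]]
  have hle : Nat.find hex ≤ Nat.find hex' + 1 :=
    Nat.find_le ((hshift _).mp (Nat.find_spec hex'))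
  have hge : Nat.find hex' ≤ Nat.find hex - 1 := by
    apply Nat.find_le
    rw [hshift]
    have h3 : Nat.find hex - 1 + 1 = Nat.find hex := by omega
    rw [h3]
    exact Nat.find_spec hex
  omega

lemma patv_step {m : α} (hsc : π.SameCycle i j) (hm : π.SameCycle i m)
    (h1 : π m ≠ i) (h2 : π m ≠ j) : patv π i j a b m = patv π i j a b (π m) := by
  have hex := hitEx π i j hsc hm
  have hm' : π.SameCycle i (π m) := (Equiv.Perm.sameCycle_apply_right).mpr hm
  have hex' := hitEx π i j hsc hm'
  rw [patv_of_ex a b hex, patv_of_ex a b hex', find_step hex hex' h1 h2]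
  have : (π ^ (Nat.find hex' + 1 + 1)) m = (π ^ (Nat.find hex' + 1)) (π m) := by
    rw [pow_succ, Equiv.Perm.mul_apply]
  rw [this]

lemma patv_at_i (hsc : π.SameCycle i j) : patv π i j a b i = a := by
  have hex := hitEx π i j hsc (Equiv.Perm.SameCycle.refl π i)
  rw [patv_of_ex a b hex, if_pos]
  -- need : (π ^ (Nat.find hex + 1)) i = j
  by_contra hne
  rcases Nat.find_spec hex with hc | hc
  · exact hne hc
  · -- (π ^ (T+1)) i = i ; reach j earlier, contradiction with minimality / hne
    obtain ⟨r, hr, hrj⟩ := reach_le π hc hsc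
    rcases Nat.lt_or_ge r (Nat.find hex) with h | h
    · exact Nat.find_min hex h (Or.inl hrj)
    · have : r = Nat.find hex := le_antisymm hr h
      exact hne (this ▸ hrj)

lemma patv_at_j (hsc : π.SameCycle i j) (hij : i ≠ j) : patv π i j a b j = b := by
  have hex := hitEx π i j hsc hsc
  rw [patv_of_ex a b hex, if_neg]
  intro hc
  -- (π ^ (T+1)) j = j; then first hit from j should be i
  obtain ⟨r, hr, hri⟩ := reach_le π hc hsc.symm
  rcases Nat.lt_or_ge r (Nat.find hex) with h | h
  · exact Nat.find_min hex h (Or.inr hri)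
  · have heq : r = Nat.find hex := le_antisymm hr h
    rw [heq] at hri
    exact hij (by rw [← hri]; exact hc)

end Pat

/-! ## solutions of the constraint system -/

section Sol

variable {β : Type*} [DecidableEq β] (π : Equiv.Perm α) (i j : α) (a b : β)

/-- the constraint system appearing in the marginal computation -/
def Csol (f : α → β) : Prop :=
  f i = a ∧ ∀ m, π m ≠ j → f m = if π m = i then b else f (π m)

instance (f : α → β) : Decidable (Csol π i j a b f) := by
  unfold Csol
  infer_instance

variable {π i j a b}

lemma sol_preim_j {f : α → β} (hsc : π.SameCycle i j) (hC : Csol π i j a b f) :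
    ∀ m, π m = j → f m = a := by
  classical
  have hex := hitEx π i j hsc (Equiv.Perm.SameCycle.refl π i)
  set T := Nat.find hex with hT
  have hchain : ∀ s ≤ T, f ((π ^ s) i) = a := by
    intro s hs
    induction s with
    | zero => simpa using hC.1
    | succ s ih =>
      have hlt : s < T := hs
      have hnot : ¬ hitP π i j i s := Nat.find_min hex hlt
      unfold hitP at hnot
      push_neg at hnot
      have hstep := hC.2 ((π ^ s) i) (by
        rw [← Equiv.Perm.mul_apply, ← pow_succ']; exact hnot.1)
      rw [if_neg (by rw [← Equiv.Perm.mul_apply, ← pow_succ']; exact hnot.2)] at hstep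
      rw [← Equiv.Perm.mul_apply, ← pow_succ'] at hstep
      rw [← hstep]
      exact ih hlt.le
  have hhit : (π ^ (T + 1)) i = j := by
    by_contra hne
    rcases Nat.find_spec hex with hc | hc
    · exact hne hc
    · obtain ⟨r, hr, hrj⟩ := reach_le π hc hsc
      rcases Nat.lt_or_ge r T with h | h
      · exact Nat.find_min hex h (Or.inl hrj)
      · have heq : r = T := le_antisymm hr h
        rw [heq] at hrj
        exact hne hrj
  intro m hm
  have : m = (π ^ T) i := by
    apply π.injective
    rw [hm, ← hhit, pow_succ', Equiv.Perm.mul_apply]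
  rw [this]
  exact hchain T le_rfl

lemma sol_eq_patv {f : α → β} (hsc : π.SameCycle i j) (hC : Csol π i j a b f) :
    ∀ m, π.SameCycle i m → f m = patv π i j a b m := by
  classical
  have key : ∀ T : ℕ, ∀ m, ∀ hm : π.SameCycle i m, Nat.find (hitEx π i j hsc hm) ≤ T →
      f m = patv π i j a b m := by
    intro T
    induction T with
    | zero =>
      intro m hm hT
      have h0 : Nat.find (hitEx π i j hsc hm) = 0 := Nat.le_zero.mp hT
      have hspec := Nat.find_spec (hitEx π i j hsc hm)
      rw [h0] at hspec
      have hspec' : π m = j ∨ π m = i := by simpa [hitP] using hspec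
      rcases hspec' with hj | hi
      · rw [sol_preim_j hsc hC m hj, patv_hit_j a b hsc hm hj]
      · by_cases hj' : π m = j
        · rw [sol_preim_j hsc hC m hj', patv_hit_j a b hsc hm hj']
        · rw [patv_hit_i a b hsc hm hi hj']
          have := hC.2 m hj'
          rwa [if_pos hi] at this
    | succ T ih =>
      intro m hm hT
      by_cases hj' : π m = j
      · rw [sol_preim_j hsc hC m hj', patv_hit_j a b hsc hm hj']
      · by_cases hi' : π m = i
        · rw [patv_hit_i a b hsc hm hi' hj']
          have := hC.2 m hj'
          rwa [if_pos hi'] at this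
        · have hm' : π.SameCycle i (π m) := (Equiv.Perm.sameCycle_apply_right).mpr hm
          have hfind := find_step (hitEx π i j hsc hm) (hitEx π i j hsc hm') hi' hj'
          have hstep := hC.2 m hj'
          rw [if_neg hi'] at hstep
          rw [hstep, patv_step a b hsc hm hi' hj']
          exact ih (π m) hm' (by omega)
  intro m hm
  exact key _ m hm le_rfl

end Sol


section Equivs

set_option linter.unusedVariables false

variable {β : Type*} [DecidableEq β] {π : Equiv.Perm α} {i j : α} {a b : β}

lemma sc_of_apply_eq {m x : α} (hx : π.SameCycle i x) (h : π m = x) : π.SameCycle i m :=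
  (Equiv.Perm.sameCycle_apply_right).mp (h ▸ hx)

/-- solutions of the constraint system are in bijection with invariant functions pinned at `i`
(same-cycle case) -/
noncomputable def solEquivInv (hsc : π.SameCycle i j) (a b : β) :
    {f : α → β // Csol π i j a b f} ≃ {f : α → β // (∀ m, f (π m) = f m) ∧ f i = a} where
  toFun f := ⟨fun m => if π.SameCycle i m then a else f.1 m, by
    refine ⟨?_, by simp [Equiv.Perm.SameCycle.refl]⟩
    intro m
    by_cases hm : π.SameCycle i m
    · simp only [Equiv.Perm.sameCycle_apply_right, hm, if_true]
    · simp only [Equiv.Perm.sameCycle_apply_right, hm, if_false]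
      have h1 : π m ≠ j := fun hc => hm (sc_of_apply_eq hsc hc)
      have h2 : π m ≠ i := fun hc => hm (sc_of_apply_eq (Equiv.Perm.SameCycle.refl π i) hc)
      have := f.2.2 m h1
      rw [if_neg h2] at this
      exact this.symm⟩
  invFun g := ⟨fun m => if π.SameCycle i m then patv π i j a b m else g.1 m, by
    constructor
    · simp only [Equiv.Perm.SameCycle.refl, if_true, patv_at_i a b hsc]
    · intro m hmj
      by_cases hm : π.SameCycle i m
      · have hm' : π.SameCycle i (π m) := (Equiv.Perm.sameCycle_apply_right).mpr hm
        simp only [hm, hm', if_true]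
        by_cases hi' : π m = i
        · rw [patv_hit_i a b hsc hm hi' hmj, if_pos hi']
        · rw [if_neg hi', patv_step a b hsc hm hi' hmj]
      · have h2 : π m ≠ i := fun hc => hm (sc_of_apply_eq (Equiv.Perm.SameCycle.refl π i) hc)
        have hm' : ¬ π.SameCycle i (π m) := fun hc => hm ((Equiv.Perm.sameCycle_apply_right).mp hc)
        simp only [hm, hm', if_false, if_neg h2]
        exact (g.2.1 m).symm⟩
  left_inv f := by
    apply Subtype.ext
    funext m
    by_cases hm : π.SameCycle i m
    · simp only [hm, if_true]
      exact (sol_eq_patv hsc f.2 m hm).symm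
    · simp [hm]
  right_inv g := by
    apply Subtype.ext
    funext m
    by_cases hm : π.SameCycle i m
    · simp only [hm, if_true]
      exact ((inv_eq_of_sameCycle g.2.1 hm).trans g.2.2).symm
    · simp [hm]

/-- peeling off the value of an invariant function on one orbit -/
noncomputable def invProdEquiv (π : Equiv.Perm α) (x : α) (c : β) :
    {f : α → β // ∀ m, f (π m) = f m} ≃
      β × {f : α → β // (∀ m, f (π m) = f m) ∧ f x = c} where
  toFun f := ⟨f.1 x, ⟨fun m => if π.SameCycle x m then c else f.1 m, by
    refine ⟨?_, by simp [Equiv.Perm.SameCycle.refl]⟩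
    intro m
    by_cases hm : π.SameCycle x m
    · simp only [Equiv.Perm.sameCycle_apply_right, hm, if_true]
    · simp only [Equiv.Perm.sameCycle_apply_right, hm, if_false, f.2 m]⟩⟩
  invFun vg := ⟨fun m => if π.SameCycle x m then vg.1 else vg.2.1 m, by
    intro m
    by_cases hm : π.SameCycle x m
    · simp only [Equiv.Perm.sameCycle_apply_right, hm, if_true]
    · simp only [Equiv.Perm.sameCycle_apply_right, hm, if_false, vg.2.2.1 m]⟩
  left_inv f := by
    apply Subtype.ext
    funext m
    by_cases hm : π.SameCycle x m
    · simp only [hm, if_true]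
      exact (inv_eq_of_sameCycle f.2 hm).symm
    · simp [hm]
  right_inv vg := by
    refine Prod.ext (by simp [Equiv.Perm.SameCycle.refl]) (Subtype.ext ?_)
    funext m
    by_cases hm : π.SameCycle x m
    · simp only [hm, if_true]
      exact ((inv_eq_of_sameCycle vg.2.2.1 hm).trans vg.2.2.2).symm
    · simp [hm]

/-- peeling off the value on a second orbit -/
noncomputable def invProdEquiv2 (π : Equiv.Perm α) {x y : α} (hxy : ¬ π.SameCycle y x)
    (aa c : β) :
    {f : α → β // (∀ m, f (π m) = f m) ∧ f x = aa} ≃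
      β × {f : α → β // (∀ m, f (π m) = f m) ∧ f x = aa ∧ f y = c} where
  toFun f := ⟨f.1 y, ⟨fun m => if π.SameCycle y m then c else f.1 m, by
    refine ⟨?_, ?_, by simp [Equiv.Perm.SameCycle.refl]⟩
    · intro m
      by_cases hm : π.SameCycle y m
      · simp only [Equiv.Perm.sameCycle_apply_right, hm, if_true]
      · simp only [Equiv.Perm.sameCycle_apply_right, hm, if_false, f.2.1 m]
    · simp only [hxy, if_false]
      exact f.2.2⟩⟩
  invFun vg := ⟨fun m => if π.SameCycle y m then vg.1 else vg.2.1 m, by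
    constructor
    · intro m
      by_cases hm : π.SameCycle y m
      · simp only [Equiv.Perm.sameCycle_apply_right, hm, if_true]
      · simp only [Equiv.Perm.sameCycle_apply_right, hm, if_false, vg.2.2.1 m]
    · simp only [hxy, if_false]
      exact vg.2.2.2.1⟩
  left_inv f := by
    apply Subtype.ext
    funext m
    by_cases hm : π.SameCycle y m
    · simp only [hm, if_true]
      exact (inv_eq_of_sameCycle f.2.1 hm).symm
    · simp [hm]
  right_inv vg := by
    refine Prod.ext (by simp [Equiv.Perm.SameCycle.refl]) (Subtype.ext ?_)
    funext m
    by_cases hm : π.SameCycle y m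
    · simp only [hm, if_true]
      exact ((inv_eq_of_sameCycle vg.2.2.1 hm).trans vg.2.2.2.2).symm
    · simp [hm]

/-- different-cycles case: solutions force `a = b` -/
lemma csol_force_eq (hns : ¬ π.SameCycle i j) {f : α → β} (hC : Csol π i j a b f) :
    a = b := by
  classical
  have hij : i ≠ j := fun h => hns (h ▸ Equiv.Perm.SameCycle.refl π i)
  have hex := exists_ret π i
  set T := Nat.find hex with hTdef
  have hspec : (π ^ (T + 1)) i = i := Nat.find_spec hex
  have horb : ∀ s : ℕ, π.SameCycle i ((π ^ s) i) := fun s => ⟨(s : ℤ), by simp⟩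
  have hchain : ∀ s ≤ T, f ((π ^ s) i) = f i := by
    intro s hs
    induction s with
    | zero => simp
    | succ s ih =>
      have hlt : s < T := hs
      have hne : π ((π ^ s) i) ≠ i := by
        rw [← Equiv.Perm.mul_apply, ← pow_succ']
        exact fun hc => Nat.find_min hex hlt hc
      have hnej : π ((π ^ s) i) ≠ j := by
        rw [← Equiv.Perm.mul_apply, ← pow_succ']
        exact fun hc => hns (hc ▸ horb (s + 1))
      have hstep := hC.2 ((π ^ s) i) hnej
      rw [if_neg hne] at hstep
      rw [pow_succ', Equiv.Perm.mul_apply, ← hstep]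
      exact ih hlt.le
  have hlast : π ((π ^ T) i) = i := by
    rw [← Equiv.Perm.mul_apply, ← pow_succ']; exact hspec
  have := hC.2 ((π ^ T) i) (by rw [hlast]; exact hij)
  rw [if_pos hlast] at this
  rw [hchain T le_rfl] at this
  rw [hC.1] at this
  exact this

/-- different-cycles case with `a = b`: solutions are exactly pinned invariant functions -/
lemma csol_iff_inv (hns : ¬ π.SameCycle i j) {f : α → β} :
    Csol π i j a a f ↔ ((∀ m, f (π m) = f m) ∧ f i = a) := by
  constructor
  · intro hC
    have hinv : ∀ m, f (π m) = f m := by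
      apply inv_of_almost π j f
      intro m hmj
      have := hC.2 m hmj
      by_cases hi' : π m = i
      · rw [if_pos hi'] at this
        rw [this, hi']
        -- f m = a, f (π m) = f i
        have hb : f i = a := hC.1
        -- goal after rw: a = f i
        exact (csol_force_eq hns hC) ▸ hb.symm
      · rwa [if_neg hi'] at this
    exact ⟨hinv, hC.1⟩
  · intro ⟨hinv, hfi⟩
    refine ⟨hfi, ?_⟩
    intro m hmj
    by_cases hi' : π m = i
    · rw [if_pos hi', ← hfi, ← hi', hinv m]
    · rw [if_neg hi', hinv m]

end Equivs


section Count

variable (d : ℕ)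

/-- number of `π`-invariant colourings -/
noncomputable def NN (π : Equiv.Perm α) : ℕ :=
  Nat.card {f : α → Fin d // ∀ m, f (π m) = f m}

/-- size of the cycle of `i` -/
noncomputable def mC (π : Equiv.Perm α) (i : α) : ℕ :=
  Nat.card {x : α // π.SameCycle i x}

lemma mC_eq_filter (π : Equiv.Perm α) (i : α) :
    mC π i = (univ.filter (fun x => π.SameCycle i x)).card := by
  rw [mC, Nat.card_eq_fintype_card, Fintype.card_subtype]

lemma mC_le (π : Equiv.Perm α) (i : α) : mC π i ≤ Fintype.card α := by
  rw [mC_eq_filter]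
  exact le_trans (Finset.card_filter_le _ _) (by simp)

lemma mC_pos (π : Equiv.Perm α) (i : α) : 0 < mC π i := by
  rw [mC_eq_filter]
  refine Finset.card_pos.mpr ⟨i, ?_⟩
  simp [Equiv.Perm.SameCycle.refl]

/-- conjugation invariance -/
lemma NN_conj (τ σ : Equiv.Perm α) : NN d (τ * σ * τ⁻¹) = NN d σ := by
  apply Nat.card_congr
  refine ⟨fun f => ⟨fun m => f.1 (τ m), fun m => ?_⟩,
    fun g => ⟨fun m => g.1 (τ⁻¹ m), fun m => ?_⟩, ?_, ?_⟩
  · have := f.2 (τ m)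
    simpa using this
  · have := g.2 (τ⁻¹ m)
    simpa using this
  · intro f; apply Subtype.ext; funext m; simp
  · intro g; apply Subtype.ext; funext m; simp

lemma sameCycle_conj (τ σ : Equiv.Perm α) (x y : α) :
    (τ * σ * τ⁻¹).SameCycle x y ↔ σ.SameCycle (τ⁻¹ x) (τ⁻¹ y) := by
  have hc : ∀ b : ℤ, (τ * σ * τ⁻¹) ^ b = τ * σ ^ b * τ⁻¹ := fun b => conj_zpow
  constructor
  · rintro ⟨b, hb⟩
    refine ⟨b, ?_⟩
    rw [hc b] at hb
    simp only [Equiv.Perm.mul_apply] at hb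
    rw [← hb]
    simp
  · rintro ⟨b, hb⟩
    refine ⟨b, ?_⟩
    rw [hc b]
    simp only [Equiv.Perm.mul_apply]
    rw [hb]
    simp

lemma mC_conj (τ σ : Equiv.Perm α) (i : α) : mC (τ * σ * τ⁻¹) i = mC σ (τ⁻¹ i) := by
  apply Nat.card_congr
  refine ⟨fun x => ⟨τ⁻¹ x.1, (sameCycle_conj τ σ i x.1).mp x.2⟩,
    fun y => ⟨τ y.1, ?_⟩, fun x => by simp, fun y => by simp⟩
  rw [sameCycle_conj]
  simpa using y.2

/-- sums of `mC * NN` do not depend on the base point -/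
lemma base_indep (n : ℕ) (q : Fin (n + 1)) :
    ∑ σ : Equiv.Perm (Fin (n + 1)), mC σ q * NN d σ
      = ∑ σ : Equiv.Perm (Fin (n + 1)), mC σ 0 * NN d σ := by
  classical
  set τ := Equiv.swap (0 : Fin (n+1)) q with hτ
  conv_lhs => rw [← Equiv.sum_comp ((Equiv.mulLeft τ).trans (Equiv.mulRight τ⁻¹))
    (fun σ => mC σ q * NN d σ)]
  apply Finset.sum_congr rfl
  intro σ _
  show mC (τ * σ * τ⁻¹) q * NN d (τ * σ * τ⁻¹) = mC σ 0 * NN d σ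
  rw [NN_conj, mC_conj]
  congr 2
  rw [hτ]
  simp [Equiv.swap_apply_right]

/-- the two decomposition lemmas for `NN` -/
lemma NN_decompose_zero (n : ℕ) (σ : Equiv.Perm (Fin n)) :
    NN d (Equiv.Perm.decomposeFin.symm (0, σ)) = d * NN d σ := by
  set π := Equiv.Perm.decomposeFin.symm ((0 : Fin (n+1)), σ) with hπ
  have hz : π 0 = 0 := Equiv.Perm.decomposeFin_symm_apply_zero 0 σ
  have hs : ∀ x : Fin n, π x.succ = (σ x).succ := by
    intro x
    rw [hπ, Equiv.Perm.decomposeFin_symm_apply_succ]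
    simp
  have : NN d π = Nat.card ((Fin d) × {g : Fin n → Fin d // ∀ m, g (σ m) = g m}) := by
    apply Nat.card_congr
    refine ⟨fun f => ⟨f.1 0, ⟨f.1 ∘ Fin.succ, fun m => ?_⟩⟩,
      fun cg => ⟨Fin.cases cg.1 cg.2.1, ?_⟩, ?_, ?_⟩
    · have := f.2 m.succ
      rw [hs m] at this
      simpa using this
    · intro m
      refine Fin.cases ?_ (fun x => ?_) m
      · rw [hz]
      · rw [hs x]
        simp only [Fin.cases_succ]
        exact cg.2.2 x
    · intro f
      apply Subtype.ext
      funext m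
      refine Fin.cases ?_ (fun x => ?_) m <;> simp
    · intro cg
      refine Prod.ext (by simp) (Subtype.ext ?_)
      funext m
      simp
  rw [show NN d π = Nat.card (Fin d × {g : Fin n → Fin d // ∀ m, g (σ m) = g m}) from this,
    Nat.card_prod]
  congr 1
  · simp


lemma NN_decompose_succ (n : ℕ) (q : Fin n) (σ : Equiv.Perm (Fin n)) :
    NN d (Equiv.Perm.decomposeFin.symm (q.succ, σ)) = NN d σ := by
  set π := Equiv.Perm.decomposeFin.symm (q.succ, σ) with hπ
  have hz : π 0 = q.succ := Equiv.Perm.decomposeFin_symm_apply_zero q.succ σ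
  have hs : ∀ x : Fin n, π x.succ = if σ x = q then 0 else (σ x).succ := by
    intro x
    rw [hπ, Equiv.Perm.decomposeFin_symm_apply_succ]
    by_cases hc : σ x = q
    · rw [if_pos hc, hc, Equiv.swap_apply_right]
    · rw [if_neg hc, Equiv.swap_apply_of_ne_of_ne (Fin.succ_ne_zero _)
        (by simpa [Fin.succ_inj] using hc)]
  apply Nat.card_congr
  refine ⟨fun f => ⟨f.1 ∘ Fin.succ, fun m => ?_⟩,
    fun g => ⟨Fin.cases (g.1 q) g.1, ?_⟩, ?_, ?_⟩
  · -- f∘succ invariant under σ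
    have hall := f.2
    by_cases hc : σ m = q
    · have h1 := hall m.succ
      rw [hs m, if_pos hc] at h1
      have h2 := hall 0
      rw [hz] at h2
      simp only [Function.comp_apply, hc]
      rw [h2, h1]
    · have h1 := hall m.succ
      rw [hs m, if_neg hc] at h1
      simpa using h1
  · intro m
    refine Fin.cases ?_ (fun x => ?_) m
    · rw [hz]; simp
    · rw [hs x]
      by_cases hc : σ x = q
      · rw [if_pos hc]
        simp only [Fin.cases_zero, Fin.cases_succ]
        rw [← hc]
        exact g.2 x
      · rw [if_neg hc]
        simp only [Fin.cases_succ]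
        exact g.2 x
  · intro f
    apply Subtype.ext
    funext m
    refine Fin.cases ?_ (fun x => ?_) m
    · simp only [Fin.cases_zero, Function.comp_apply]
      have h2 := f.2 0
      rw [hz] at h2
      exact h2
    · simp
  · intro g
    apply Subtype.ext
    funext m
    simp

/-- cycle of 0 under `decomposeFin.symm (0, σ)` is trivial -/
lemma mC_decompose_zero (n : ℕ) (σ : Equiv.Perm (Fin n)) :
    mC (Equiv.Perm.decomposeFin.symm (0, σ)) 0 = 1 := by
  set π := Equiv.Perm.decomposeFin.symm ((0 : Fin (n+1)), σ) with hπ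
  have hz : π 0 = 0 := Equiv.Perm.decomposeFin_symm_apply_zero 0 σ
  have hfix : ∀ t : ℕ, (π ^ t) 0 = 0 := by
    intro t
    induction t with
    | zero => rfl
    | succ t ih => rw [pow_succ, Equiv.Perm.mul_apply, hz, ih]
  rw [mC, Nat.card_eq_one_iff_unique]
  constructor
  · constructor
    intro x y
    apply Subtype.ext
    obtain ⟨t, ht⟩ := sc_nat x.2
    obtain ⟨t', ht'⟩ := sc_nat y.2
    rw [← ht, ← ht', hfix, hfix]
  · exact ⟨⟨0, Equiv.Perm.SameCycle.refl π 0⟩⟩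

lemma mC_decompose_succ (n : ℕ) (q : Fin n) (σ : Equiv.Perm (Fin n)) :
    mC (Equiv.Perm.decomposeFin.symm (q.succ, σ)) 0 = 1 + mC σ q := by
  classical
  set π := Equiv.Perm.decomposeFin.symm (q.succ, σ) with hπ
  have hz : π 0 = q.succ := Equiv.Perm.decomposeFin_symm_apply_zero q.succ σ
  have hs : ∀ x : Fin n, π x.succ = if σ x = q then 0 else (σ x).succ := by
    intro x
    rw [hπ, Equiv.Perm.decomposeFin_symm_apply_succ]
    by_cases hc : σ x = q
    · rw [if_pos hc, hc, Equiv.swap_apply_right]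
    · rw [if_neg hc, Equiv.swap_apply_of_ne_of_ne (Fin.succ_ne_zero _)
        (by simpa [Fin.succ_inj] using hc)]
  -- forward characterization
  have fwd : ∀ t : ℕ, (π ^ t) 0 = 0 ∨ ∃ y : Fin n, (π ^ t) 0 = y.succ ∧ σ.SameCycle q y := by
    intro t
    induction t with
    | zero => left; rfl
    | succ t ih =>
      rw [pow_succ', Equiv.Perm.mul_apply]
      rcases ih with h | ⟨y, hy, hscy⟩
      · rw [h, hz]
        right
        exact ⟨q, rfl, Equiv.Perm.SameCycle.refl σ q⟩
      · rw [hy, hs y]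
        by_cases hc : σ y = q
        · rw [if_pos hc]; left; rfl
        · rw [if_neg hc]
          right
          exact ⟨σ y, rfl, (Equiv.Perm.sameCycle_apply_right).mpr hscy⟩
  -- backward: reach any point on σ-cycle of q
  have bwd : ∀ y : Fin n, σ.SameCycle q y → π.SameCycle 0 y.succ := by
    intro y hy
    obtain ⟨s, hsy⟩ := sc_nat hy
    have hret := exists_ret σ q
    set T := Nat.find hret with hT
    have hTs : (σ ^ (T + 1)) q = q := Nat.find_spec hret
    have hr : (σ ^ (s % (T + 1))) q = y := by rw [← pow_mod_fix σ hTs s, hsy]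
    have hrT : s % (T + 1) ≤ T := Nat.le_of_lt_succ (Nat.mod_lt _ (Nat.succ_pos _))
    have chain : ∀ r ≤ T, (π ^ (r + 1)) 0 = ((σ ^ r) q).succ := by
      intro r hrle
      induction r with
      | zero => simpa [pow_one] using hz
      | succ r ihh =>
        have hlt : r < T := hrle
        have hne : σ ((σ ^ r) q) ≠ q := by
          rw [← Equiv.Perm.mul_apply, ← pow_succ']
          exact fun hc => Nat.find_min hret hlt hc
        rw [pow_succ', Equiv.Perm.mul_apply, ihh hlt.le, hs ((σ ^ r) q), if_neg hne,
          ← Equiv.Perm.mul_apply, ← pow_succ']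
    refine ⟨((s % (T + 1)) + 1 : ℕ), ?_⟩
    rw [zpow_natCast, chain _ hrT, hr]
  -- now count
  rw [mC_eq_filter, mC_eq_filter]
  have hset : (univ.filter (fun x => π.SameCycle 0 x)) =
      insert 0 ((univ.filter (fun x => σ.SameCycle q x)).map
        ⟨Fin.succ, Fin.succ_injective n⟩) := by
    ext x
    simp only [mem_filter, mem_univ, true_and, mem_insert, mem_map, Function.Embedding.coeFn_mk]
    constructor
    · intro hx
      obtain ⟨t, ht⟩ := sc_nat hx
      rcases fwd t with h | ⟨y, hy, hscy⟩
      · left; rw [← ht, h]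
      · right
        exact ⟨y, hscy, by rw [← ht, hy]⟩
    · rintro (rfl | ⟨y, hy, rfl⟩)
      · exact Equiv.Perm.SameCycle.refl π 0
      · exact bwd y hy
  rw [hset, Finset.card_insert_of_notMem (by simp [Fin.succ_ne_zero]), Finset.card_map]
  omega

/-- the global counts -/
noncomputable def FF (n : ℕ) : ℕ := ∑ π : Equiv.Perm (Fin n), NN d π

noncomputable def GG (n : ℕ) : ℕ := ∑ π : Equiv.Perm (Fin (n + 1)), mC π 0 * NN d π

lemma FF_zero : FF d 0 = 1 := by
  rw [FF]
  have h1 : ∀ π : Equiv.Perm (Fin 0), NN d π = 1 := by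
    intro π
    rw [NN, Nat.card_eq_one_iff_unique]
    exact ⟨⟨fun f g => Subtype.ext (funext fun m => m.elim0)⟩,
      ⟨⟨fun m => m.elim0, fun m => m.elim0⟩⟩⟩
  rw [Finset.sum_congr rfl (fun π _ => h1 π), Finset.sum_const]
  simp

lemma FF_succ (n : ℕ) : FF d (n + 1) = (d + n) * FF d n := by
  rw [FF, ← Equiv.sum_comp (Equiv.Perm.decomposeFin.symm) (fun π => NN d π),
    Fintype.sum_prod_type, Fin.sum_univ_succ]
  have h0 : ∑ σ : Equiv.Perm (Fin n), NN d (Equiv.Perm.decomposeFin.symm (0, σ)) = d * FF d n := by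
    rw [Finset.sum_congr rfl (fun σ _ => NN_decompose_zero d n σ), ← Finset.mul_sum]
    rfl
  have h1 : ∀ q : Fin n, ∑ σ : Equiv.Perm (Fin n),
      NN d (Equiv.Perm.decomposeFin.symm (q.succ, σ)) = FF d n := by
    intro q
    rw [Finset.sum_congr rfl (fun σ _ => NN_decompose_succ d n q σ)]
    rfl
  rw [h0, Finset.sum_congr rfl (fun q _ => h1 q), Finset.sum_const]
  simp only [Finset.card_univ, Fintype.card_fin, smul_eq_mul]
  ring

lemma GG_zero : GG d 0 = d := by
  rw [GG]
  have h1 : ∀ π : Equiv.Perm (Fin 1), mC π 0 * NN d π = d := by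
    intro π
    have hmc : mC π 0 = 1 := by
      rw [mC, Nat.card_eq_one_iff_unique]
      exact ⟨⟨fun x y => Subtype.ext (Subsingleton.elim _ _)⟩,
        ⟨⟨0, Equiv.Perm.SameCycle.refl π 0⟩⟩⟩
    have hnn : NN d π = d := by
      rw [NN]
      have : {f : Fin 1 → Fin d // ∀ m, f (π m) = f m} ≃ Fin d :=
        ⟨fun f => f.1 0, fun c => ⟨fun _ => c, fun m => rfl⟩,
          fun f => Subtype.ext (funext fun m => by
            have : m = 0 := Subsingleton.elim _ _
            rw [this]), fun c => rfl⟩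
      rw [Nat.card_congr this, Nat.card_eq_fintype_card, Fintype.card_fin]
    rw [hmc, hnn, one_mul]
  rw [Finset.sum_congr rfl (fun π _ => h1 π), Finset.sum_const]
  have : (univ : Finset (Equiv.Perm (Fin 1))).card = 1 := by
    rw [Finset.card_univ, Fintype.card_perm]
    simp
  rw [this, one_smul]

lemma GG_succ (n : ℕ) : GG d (n + 1) = (d + n + 1) * FF d (n + 1) + (n + 1) * GG d n := by
  rw [GG, ← Equiv.sum_comp (Equiv.Perm.decomposeFin.symm) (fun π => mC π 0 * NN d π),
    Fintype.sum_prod_type, Fin.sum_univ_succ]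
  have h0 : ∑ σ : Equiv.Perm (Fin (n + 1)),
      mC (Equiv.Perm.decomposeFin.symm (0, σ)) 0 * NN d (Equiv.Perm.decomposeFin.symm (0, σ))
      = d * FF d (n + 1) := by
    rw [Finset.sum_congr rfl (fun σ _ => by
      rw [mC_decompose_zero (n + 1) σ, NN_decompose_zero d (n + 1) σ, one_mul]),
      ← Finset.mul_sum]
    rfl
  have h1 : ∀ q : Fin (n + 1), ∑ σ : Equiv.Perm (Fin (n + 1)),
      mC (Equiv.Perm.decomposeFin.symm (q.succ, σ)) 0 *
        NN d (Equiv.Perm.decomposeFin.symm (q.succ, σ))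
      = FF d (n + 1) + GG d n := by
    intro q
    rw [Finset.sum_congr rfl (fun σ _ => by
      rw [mC_decompose_succ (n + 1) q σ, NN_decompose_succ d (n + 1) q σ, add_mul, one_mul])]
    rw [Finset.sum_add_distrib, base_indep d n q]
    rfl
  rw [h0, Finset.sum_congr rfl (fun q _ => h1 q), Finset.sum_const]
  simp only [Finset.card_univ, Fintype.card_fin, smul_eq_mul]
  ring

lemma FF_closed (n : ℕ) : FF d n = ∏ k ∈ Finset.range n, (d + k) := by
  induction n with
  | zero => rw [FF_zero]; rfl
  | succ n ih => rw [FF_succ, ih, Finset.prod_range_succ]; ring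

lemma GG_closed (n : ℕ) : (d + 1) * GG d n = (d + n + 1) * FF d (n + 1) := by
  induction n with
  | zero => rw [GG_zero, FF_succ, FF_zero]; ring
  | succ n ih =>
    have h2 : FF d (n + 1 + 1) = (d + (n + 1)) * FF d (n + 1) := FF_succ d (n + 1)
    calc (d + 1) * GG d (n + 1)
        = (d + n + 1) * ((d + 1) * FF d (n + 1)) + (n + 1) * ((d + 1) * GG d n) := by
          rw [GG_succ]; ring
      _ = (d + n + 1) * ((d + 1) * FF d (n + 1)) + (n + 1) * ((d + n + 1) * FF d (n + 1)) := by
          rw [ih]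
      _ = (d + (n + 1) + 1) * FF d (n + 1 + 1) := by rw [h2]; ring

end Count


-- matrix part
namespace MatrixPart
open Finset Equiv

open Finset Equiv

variable {n d : ℕ}

/-- `ρ` at site `j`, identity elsewhere -/
noncomputable def siteOp (j : Fin n) (ρ : Matrix (Fin d) (Fin d) ℂ) :
    Matrix (Fin n → Fin d) (Fin n → Fin d) ℂ :=
  fun f g => ρ (f j) (g j) * ∏ k ∈ Finset.univ.erase j, (if f k = g k then (1 : ℂ) else 0)

lemma firstSite_eq_siteOp [NeZero n] (ρ : Matrix (Fin d) (Fin d) ℂ) :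
    firstSite (n := n) ρ = siteOp 0 ρ := rfl

lemma siteOp_apply (j : Fin n) (ρ : Matrix (Fin d) (Fin d) ℂ) (f g : Fin n → Fin d) :
    siteOp j ρ f g = if (∀ k, k ≠ j → f k = g k) then ρ (f j) (g j) else 0 := by
  simp only [siteOp, Finset.prod_boole]
  rw [mul_ite, mul_one, mul_zero]
  congr 1
  simp [Finset.mem_erase]

lemma permMat_mul_apply (π : Equiv.Perm (Fin n)) (A : Matrix (Fin n → Fin d) (Fin n → Fin d) ℂ)
    (f g : Fin n → Fin d) :
    (permMat (n := n) (d := d) π * A) f g = A (fun k => f (π.symm k)) g := by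
  rw [Matrix.mul_apply]
  have key : ∀ h, permMat (d := d) π f h * A h g
      = if h = (fun k => f (π.symm k)) then A h g else 0 := by
    intro h
    simp only [permMat]
    by_cases hc : (fun i => h (π i)) = f
    · rw [if_pos hc, one_mul, if_pos]
      funext k
      rw [← hc]
      simp
    · rw [if_neg hc, zero_mul, if_neg]
      intro hh
      apply hc
      subst hh
      funext i
      simp
  rw [Finset.sum_congr rfl (fun h _ => key h), Finset.sum_ite_eq']
  simp

lemma mul_permMat_apply (π : Equiv.Perm (Fin n)) (A : Matrix (Fin n → Fin d) (Fin n → Fin d) ℂ)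
    (f g : Fin n → Fin d) :
    (A * permMat (n := n) (d := d) π) f g = A f (fun k => g (π k)) := by
  rw [Matrix.mul_apply]
  have key : ∀ h, A f h * permMat (d := d) π h g
      = if h = (fun k => g (π k)) then A f h else 0 := by
    intro h
    simp only [permMat]
    by_cases hc : (fun i => g (π i)) = h
    · rw [if_pos hc, mul_one, if_pos hc.symm]
    · rw [if_neg hc, mul_zero, if_neg (fun hh => hc hh.symm)]
  rw [Finset.sum_congr rfl (fun h _ => key h), Finset.sum_ite_eq']
  simp

lemma permMat_mul_permMat (π τ : Equiv.Perm (Fin n)) :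
    permMat (d := d) π * permMat τ = permMat (τ * π) := by
  ext f g
  rw [permMat_mul_apply]
  simp only [permMat]
  apply if_congr _ rfl rfl
  constructor
  · intro h
    funext x
    have h1 := congrFun h (π x)
    simp only [Equiv.symm_apply_apply] at h1
    exact h1
  · intro h
    funext x
    have h1 := congrFun h (π.symm x)
    simp only [Equiv.Perm.mul_apply, Equiv.apply_symm_apply] at h1
    exact h1

lemma permMat_one : permMat (d := d) (1 : Equiv.Perm (Fin n)) = 1 := by
  ext f g
  simp only [permMat, Matrix.one_apply, Equiv.Perm.one_apply]
  apply if_congr _ rfl rfl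
  constructor
  · intro h; rw [← h]
  · intro h; rw [h]

lemma symProj_mul_permMat (τ : Equiv.Perm (Fin n)) :
    symProj n d * permMat τ = symProj n d := by
  rw [symProj, Matrix.smul_mul, Finset.sum_mul]
  congr 1
  rw [Finset.sum_congr rfl (fun π _ => permMat_mul_permMat π τ)]
  exact Equiv.sum_comp (Equiv.mulLeft τ) (fun π => permMat (d := d) π)

lemma symProj_idem : symProj n d * symProj n d = symProj n d := by
  conv_lhs => rw [show symProj n d * symProj n d
    = symProj n d * (((n.factorial : ℂ))⁻¹ • ∑ π : Equiv.Perm (Fin n), permMat π) from rfl]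
  rw [Matrix.mul_smul, Matrix.mul_sum]
  rw [Finset.sum_congr rfl (fun π _ => symProj_mul_permMat π), Finset.sum_const]
  simp only [Finset.card_univ, Fintype.card_perm, Fintype.card_fin]
  rw [← Nat.cast_smul_eq_nsmul ℂ, smul_smul, inv_mul_cancel₀, one_smul]
  exact_mod_cast Nat.factorial_ne_zero n

lemma trace_siteMarginal (i : Fin n) (M : Matrix (Fin n → Fin d) (Fin n → Fin d) ℂ) :
    (siteMarginal i M).trace = M.trace := by
  simp only [Matrix.trace, Matrix.diag, siteMarginal]
  rw [Finset.sum_comm]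
  apply Finset.sum_congr rfl
  intro f _
  rw [Finset.sum_ite_eq]
  simp [Function.update_eq_self]

lemma siteMarginal_smul (i : Fin n) (c : ℂ) (M : Matrix (Fin n → Fin d) (Fin n → Fin d) ℂ) :
    siteMarginal i (c • M) = c • siteMarginal i M := by
  funext a b
  simp only [siteMarginal, Matrix.smul_apply, smul_eq_mul, Finset.mul_sum]
  apply Finset.sum_congr rfl
  intro f _
  split <;> simp

lemma siteMarginal_sum {ι : Type*} (s : Finset ι) (i : Fin n)
    (M : ι → Matrix (Fin n → Fin d) (Fin n → Fin d) ℂ) :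
    siteMarginal i (∑ x ∈ s, M x) = ∑ x ∈ s, siteMarginal i (M x) := by
  funext a b
  have key : ∀ f : Fin n → Fin d,
      (if f i = a then (∑ x ∈ s, M x) f (Function.update f i b) else 0)
      = ∑ x ∈ s, (if f i = a then M x f (Function.update f i b) else 0) := by
    intro f
    rw [Matrix.sum_apply]
    split <;> simp
  show (∑ f : Fin n → Fin d, if f i = a then (∑ x ∈ s, M x) f (Function.update f i b) else 0)
      = (∑ x ∈ s, siteMarginal i (M x)) a b
  rw [Finset.sum_congr rfl (fun f _ => key f), Finset.sum_comm, Matrix.sum_apply]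
  rfl

/-! ### product-form matrices -/

lemma prod_mul_prod_apply (P Q : Fin n → Matrix (Fin d) (Fin d) ℂ)
    (M N : Matrix (Fin n → Fin d) (Fin n → Fin d) ℂ)
    (hM : ∀ f g, M f g = ∏ k, P k (f k) (g k))
    (hN : ∀ f g, N f g = ∏ k, Q k (f k) (g k)) (f g : Fin n → Fin d) :
    (M * N) f g = ∏ k, (P k * Q k) (f k) (g k) := by
  rw [Matrix.mul_apply]
  simp only [hM, hN]
  have h1 : ∀ h : Fin n → Fin d, (∏ k, P k (f k) (h k)) * ∏ k, Q k (h k) (g k)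
      = ∏ k, (P k (f k) (h k) * Q k (h k) (g k)) := fun h => (Finset.prod_mul_distrib).symm
  rw [Finset.sum_congr rfl (fun h _ => h1 h)]
  have h2 := Finset.prod_univ_sum (fun _ : Fin n => (univ : Finset (Fin d)))
    (fun k x => P k (f k) x * Q k x (g k))
  rw [Fintype.piFinset_univ] at h2
  rw [← h2]
  apply Finset.prod_congr rfl
  intro k _
  rw [Matrix.mul_apply]

/-- `A` at site `j`, `U` elsewhere -/
noncomputable def mixOp (j : Fin n) (A U : Matrix (Fin d) (Fin d) ℂ) :
    Matrix (Fin n → Fin d) (Fin n → Fin d) ℂ :=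
  fun f g => A (f j) (g j) * ∏ k ∈ Finset.univ.erase j, U (f k) (g k)

lemma mixOp_eq_prod (j : Fin n) (A U : Matrix (Fin d) (Fin d) ℂ) :
    mixOp j A U = fun f g => ∏ k, (if k = j then A else U) (f k) (g k) := by
  funext f g
  rw [mixOp, ← Finset.mul_prod_erase univ _ (mem_univ j), if_pos rfl]
  congr 1
  apply Finset.prod_congr rfl
  intro k hk
  rw [if_neg (Finset.mem_erase.mp hk).1]

lemma mixOp_mul (j : Fin n) (A U B V : Matrix (Fin d) (Fin d) ℂ) :
    mixOp j A U * mixOp j B V = mixOp j (A * B) (U * V) := by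
  funext f g
  rw [prod_mul_prod_apply (fun k => if k = j then A else U) (fun k => if k = j then B else V)
    (mixOp j A U) (mixOp j B V)
    (fun f g => congrFun (congrFun (mixOp_eq_prod j A U) f) g)
    (fun f g => congrFun (congrFun (mixOp_eq_prod j B V) f) g) f g]
  rw [mixOp_eq_prod]
  apply Finset.prod_congr rfl
  intro k _
  by_cases hk : k = j <;> simp [hk]

lemma siteOp_eq_mixOp (j : Fin n) (ρ : Matrix (Fin d) (Fin d) ℂ) :
    siteOp j ρ = mixOp j ρ 1 := by
  funext f g
  simp only [siteOp, mixOp, Matrix.one_apply]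

lemma kronPow_eq_mixOp (j : Fin n) (U : Matrix (Fin d) (Fin d) ℂ) :
    kronPow U = mixOp j U U := by
  funext f g
  rw [kronPow, mixOp, ← Finset.mul_prod_erase univ _ (mem_univ j)]

lemma kronPow_conjTranspose (U : Matrix (Fin d) (Fin d) ℂ) :
    (kronPow (n := n) U)ᴴ = kronPow Uᴴ := by
  ext f g
  simp [Matrix.conjTranspose_apply, kronPow, star_prod]

lemma kron_site_conj (j : Fin n) (U ρ : Matrix (Fin d) (Fin d) ℂ) (hU : U * Uᴴ = 1) :
    kronPow U * siteOp j ρ * kronPow Uᴴ = siteOp j (uconj U ρ) := by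
  rw [siteOp_eq_mixOp, kronPow_eq_mixOp j U, kronPow_eq_mixOp j Uᴴ, mixOp_mul, mixOp_mul,
    siteOp_eq_mixOp]
  rw [mul_one, hU]
  rfl

lemma kron_permMat_comm (π : Equiv.Perm (Fin n)) (U : Matrix (Fin d) (Fin d) ℂ) :
    kronPow U * permMat π = permMat π * kronPow U := by
  ext f g
  rw [mul_permMat_apply, permMat_mul_apply]
  show ∏ k, U (f k) ((fun k => g (π k)) k) = ∏ k, U ((fun k => f (π.symm k)) k) (g k)
  rw [← Equiv.prod_comp π (fun k => U (f (π.symm k)) (g k))]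
  simp

lemma symProj_kron_comm (U : Matrix (Fin d) (Fin d) ℂ) :
    symProj n d * kronPow U = kronPow U * symProj n d := by
  rw [symProj, Matrix.smul_mul, Matrix.mul_smul, Finset.sum_mul, Matrix.mul_sum]
  congr 1
  apply Finset.sum_congr rfl
  intro π _
  exact (kron_permMat_comm π U).symm

lemma siteOp_mul_permMat (j : Fin n) (π : Equiv.Perm (Fin n)) (ρ : Matrix (Fin d) (Fin d) ℂ) :
    siteOp j ρ * permMat π = permMat π * siteOp (π j) ρ := by
  ext f g
  rw [mul_permMat_apply, permMat_mul_apply, siteOp_apply, siteOp_apply]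
  have hval : f (π.symm (π j)) = f j := by simp
  rw [hval]
  apply if_congr _ rfl rfl
  constructor
  · intro h k hk
    have := h (π.symm k) (fun hc => hk (by rw [← hc]; simp))
    simpa using this
  · intro h k hk
    have := h (π k) (fun hc => hk (π.injective (by simpa using hc)))
    simpa using this


end MatrixPart
section Core

open Finset

lemma NN_fiber {α : Type*} [DecidableEq α] [Fintype α] (d : ℕ) (π : Equiv.Perm α) (x : α)
    (c : Fin d) :
    NN d π = d * Nat.card {f : α → Fin d // (∀ m, f (π m) = f m) ∧ f x = c} := by
  rw [NN, Nat.card_congr (invProdEquiv π x c), Nat.card_prod, Nat.card_eq_fintype_card,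
    Fintype.card_fin]

lemma NN_fiber2 {α : Type*} [DecidableEq α] [Fintype α] (d : ℕ) (π : Equiv.Perm α) {x y : α}
    (h : ¬ π.SameCycle y x) (aa c : Fin d) :
    NN d π = d * (d * Nat.card
      {f : α → Fin d // (∀ m, f (π m) = f m) ∧ f x = aa ∧ f y = c}) := by
  rw [NN_fiber d π x aa]
  congr 1
  rw [Nat.card_congr (invProdEquiv2 π h aa c), Nat.card_prod, Nat.card_eq_fintype_card,
    Fintype.card_fin]

variable {n d : ℕ}

lemma sum_boole_card (P : (Fin n → Fin d) → Prop) [DecidablePred P] (c : ℂ) :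
    (∑ f : Fin n → Fin d, if P f then c else 0)
      = (Nat.card {f : Fin n → Fin d // P f} : ℂ) * c := by
  classical
  rw [Finset.sum_ite, Finset.sum_const_zero, add_zero, Finset.sum_const, nsmul_eq_mul]
  congr 2
  rw [Nat.card_eq_fintype_card, Fintype.card_subtype]

open MatrixPart

lemma marginal_entry (π : Equiv.Perm (Fin n)) (i j : Fin n) (ρ : Matrix (Fin d) (Fin d) ℂ)
    (a b : Fin d) :
    siteMarginal i (permMat π * siteOp j ρ) a b
      = ∑ f : Fin n → Fin d,
          if Csol π i j a b f then ρ (f (π.symm j)) (if j = i then b else f j) else 0 := by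
  rw [siteMarginal]
  apply Finset.sum_congr rfl
  intro f _
  rw [permMat_mul_apply, siteOp_apply]
  beta_reduce
  have hiff : (∀ k, k ≠ j → f (π.symm k) = Function.update f i b k)
      ↔ (∀ m, π m ≠ j → f m = if π m = i then b else f (π m)) := by
    constructor
    · intro h m hm
      have h1 := h (π m) hm
      simp only [Equiv.symm_apply_apply, Function.update_apply] at h1
      exact h1
    · intro h k hk
      have h1 := h (π.symm k) (by simpa using hk)
      simp only [Equiv.apply_symm_apply] at h1
      rw [Function.update_apply]
      simpa using h1
  have hup : Function.update f i b j = if j = i then b else f j := Function.update_apply f i b j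
  by_cases h1 : f i = a
  · by_cases h2 : ∀ m, π m ≠ j → f m = if π m = i then b else f (π m)
    · rw [if_pos h1, if_pos (hiff.mpr h2), if_pos (show Csol π i j a b f from ⟨h1, h2⟩), hup]
    · rw [if_pos h1, if_neg (fun hc => h2 (hiff.mp hc)),
        if_neg (fun hc : Csol π i j a b f => h2 hc.2)]
  · rw [if_neg h1, if_neg (fun hc : Csol π i j a b f => h1 hc.1)]

lemma core_same (hd : 0 < d) (π : Equiv.Perm (Fin n)) {i j : Fin n} (hsc : π.SameCycle i j)
    (ρ : Matrix (Fin d) (Fin d) ℂ) :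
    siteMarginal i (permMat π * siteOp j ρ) = ((NN d π : ℂ) / d) • ρ := by
  funext a b
  rw [marginal_entry]
  have hcong : ∀ f : Fin n → Fin d,
      (if Csol π i j a b f then ρ (f (π.symm j)) (if j = i then b else f j) else 0)
      = if Csol π i j a b f then ρ a b else 0 := by
    intro f
    by_cases hC : Csol π i j a b f
    · rw [if_pos hC, if_pos hC]
      have h1 : f (π.symm j) = a := sol_preim_j hsc hC (π.symm j) (by simp)
      rw [h1]
      by_cases hji : j = i
      · rw [if_pos hji]
      · rw [if_neg hji, sol_eq_patv hsc hC j hsc, patv_at_j a b hsc (fun h => hji h.symm)]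
    · rw [if_neg hC, if_neg hC]
  rw [Finset.sum_congr rfl (fun f _ => hcong f), sum_boole_card]
  have hK : Nat.card {f : Fin n → Fin d // Csol π i j a b f}
      = Nat.card {f : Fin n → Fin d // (∀ m, f (π m) = f m) ∧ f i = a} :=
    Nat.card_congr (solEquivInv hsc a b)
  have hNN : (NN d π : ℂ)
      = d * (Nat.card {f : Fin n → Fin d // Csol π i j a b f} : ℂ) := by
    rw [hK]
    exact_mod_cast congrArg Nat.cast (NN_fiber d π i a)
  have hd0 : (d : ℂ) ≠ 0 := Nat.cast_ne_zero.mpr hd.ne'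
  simp only [Matrix.smul_apply, smul_eq_mul]
  rw [hNN]
  field_simp

lemma core_diff (hd : 0 < d) (π : Equiv.Perm (Fin n)) {i j : Fin n} (hns : ¬ π.SameCycle i j)
    (ρ : Matrix (Fin d) (Fin d) ℂ) :
    siteMarginal i (permMat π * siteOp j ρ)
      = ((NN d π : ℂ) / (d ^ 2)) • (ρ.trace • (1 : Matrix (Fin d) (Fin d) ℂ)) := by
  have hij : i ≠ j := fun h => hns (h ▸ Equiv.Perm.SameCycle.refl π i)
  have hd0 : (d : ℂ) ≠ 0 := Nat.cast_ne_zero.mpr hd.ne'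
  funext a b
  rw [marginal_entry]
  have hRHS : (((NN d π : ℂ) / (d ^ 2)) • (ρ.trace • (1 : Matrix (Fin d) (Fin d) ℂ))) a b
      = (NN d π : ℂ) / (d ^ 2) * (ρ.trace * (1 : Matrix (Fin d) (Fin d) ℂ) a b) := by
    rw [Matrix.smul_apply, Matrix.smul_apply, smul_eq_mul, smul_eq_mul]
  by_cases hab : a = b
  · subst hab
    have hcong : ∀ f : Fin n → Fin d,
        (if Csol π i j a a f then ρ (f (π.symm j)) (if j = i then a else f j) else 0)
        = ∑ x : Fin d, if ((∀ m, f (π m) = f m) ∧ f i = a ∧ f j = x) then ρ x x else 0 := by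
      intro f
      by_cases hC : Csol π i j a a f
      · obtain ⟨hinv, hfi⟩ := (csol_iff_inv hns).mp hC
        rw [if_pos hC, if_neg (fun h => hij h.symm)]
        have hpre : f (π.symm j) = f j := by
          have h2 := hinv (π.symm j)
          rw [Equiv.apply_symm_apply] at h2
          exact h2.symm
        rw [hpre]
        have : ∀ x : Fin d, (if ((∀ m, f (π m) = f m) ∧ f i = a ∧ f j = x) then ρ x x else 0)
            = if f j = x then ρ x x else 0 := by
          intro x
          by_cases hx : f j = x
          · rw [if_pos hx, if_pos ⟨hinv, hfi, hx⟩]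
          · rw [if_neg hx, if_neg (fun hc => hx hc.2.2)]
        rw [Finset.sum_congr rfl (fun x _ => this x), Finset.sum_ite_eq]
        simp
      · rw [if_neg hC]
        symm
        apply Finset.sum_eq_zero
        intro x _
        rw [if_neg]
        rintro ⟨hinv, hfi, hfj⟩
        exact hC ((csol_iff_inv hns).mpr ⟨hinv, hfi⟩)
    rw [Finset.sum_congr rfl (fun f _ => hcong f), Finset.sum_comm]
    rw [Finset.sum_congr rfl (fun x _ => sum_boole_card _ _)]
    have hK : ∀ x : Fin d, (Nat.card {f : Fin n → Fin d //
        (∀ m, f (π m) = f m) ∧ f i = a ∧ f j = x} : ℂ) = (NN d π : ℂ) / (d ^ 2) := by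
      intro x
      have h2 := NN_fiber2 d π (fun h => hns h.symm) a x
      have h3 : (NN d π : ℂ) = d * (d * (Nat.card {f : Fin n → Fin d //
          (∀ m, f (π m) = f m) ∧ f i = a ∧ f j = x} : ℂ)) := by exact_mod_cast congrArg Nat.cast h2
      rw [h3]
      field_simp
    rw [Finset.sum_congr rfl (fun x _ => by rw [hK x])]
    rw [hRHS, Matrix.one_apply_eq, mul_one, Matrix.trace, Finset.mul_sum]
    rfl
  · have hzero : ∀ f : Fin n → Fin d,
        (if Csol π i j a b f then ρ (f (π.symm j)) (if j = i then b else f j) else 0) = 0 := by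
      intro f
      rw [if_neg (fun hC => hab (csol_force_eq hns hC))]
    rw [Finset.sum_congr rfl (fun f _ => hzero f), Finset.sum_const_zero, hRHS,
      Matrix.one_apply_ne hab]
    ring

end Core

section Assemble

open Finset MatrixPart

variable {n d : ℕ}

lemma sandwich [NeZero n] (ρ : Matrix (Fin d) (Fin d) ℂ) :
    symProj n d * siteOp (0 : Fin n) ρ * symProj n d
      = ((n.factorial : ℂ))⁻¹ • ∑ τ : Equiv.Perm (Fin n), (symProj n d * siteOp (τ 0) ρ) := by
  have key : ∀ τ : Equiv.Perm (Fin n),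
      symProj n d * siteOp (0 : Fin n) ρ * permMat τ = symProj n d * siteOp (τ 0) ρ := by
    intro τ
    rw [mul_assoc, siteOp_mul_permMat, ← mul_assoc, symProj_mul_permMat]
  calc symProj n d * siteOp (0 : Fin n) ρ * symProj n d
      = ((n.factorial : ℂ))⁻¹ • ∑ τ : Equiv.Perm (Fin n),
          (symProj n d * siteOp (0 : Fin n) ρ * permMat τ) := by
        rw [symProj, Matrix.mul_smul, Matrix.mul_sum]
    _ = ((n.factorial : ℂ))⁻¹ • ∑ τ : Equiv.Perm (Fin n), (symProj n d * siteOp (τ 0) ρ) := by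
        rw [Finset.sum_congr rfl (fun τ _ => key τ)]

lemma symProj_mul_siteOp (j' : Fin n) (ρ : Matrix (Fin d) (Fin d) ℂ) :
    symProj n d * siteOp j' ρ
      = ((n.factorial : ℂ))⁻¹ • ∑ σ : Equiv.Perm (Fin n), (permMat σ * siteOp j' ρ) := by
  rw [symProj, Matrix.smul_mul, Finset.sum_mul]

lemma marg_symProj (hd : 0 < d) (i j' : Fin n) (ρ : Matrix (Fin d) (Fin d) ℂ) :
    siteMarginal i (symProj n d * siteOp j' ρ)
      = ((n.factorial : ℂ))⁻¹ • ∑ σ : Equiv.Perm (Fin n),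
          (if σ.SameCycle i j' then ((NN d σ : ℂ) / d) • ρ
            else ((NN d σ : ℂ) / (d ^ 2)) • (ρ.trace • 1)) := by
  rw [symProj_mul_siteOp, siteMarginal_smul, siteMarginal_sum]
  congr 1
  apply Finset.sum_congr rfl
  intro σ _
  by_cases hsc : σ.SameCycle i j'
  · rw [if_pos hsc, core_same hd σ hsc]
  · rw [if_neg hsc, core_diff hd σ hsc]

lemma sum_perm_apply_zero {M : Type*} [AddCommMonoid M] (m : ℕ) (F : Fin (m + 1) → M) :
    ∑ τ : Equiv.Perm (Fin (m + 1)), F (τ 0) = m.factorial • ∑ p, F p := by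
  rw [← Equiv.sum_comp (Equiv.Perm.decomposeFin.symm) (fun τ => F (τ 0)),
    Fintype.sum_prod_type]
  rw [Finset.sum_congr rfl (fun p _ => Finset.sum_congr rfl
    (fun e _ => by rw [Equiv.Perm.decomposeFin_symm_apply_zero]))]
  rw [Finset.sum_congr rfl (fun p _ => Finset.sum_const _), ← Finset.smul_sum]
  congr 1
  rw [Finset.card_univ, Fintype.card_perm, Fintype.card_fin]

lemma sum_ite_sc (σ : Equiv.Perm (Fin n)) (i : Fin n) (A B : Matrix (Fin d) (Fin d) ℂ) :
    ∑ p : Fin n, (if σ.SameCycle i p then A else B)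
      = (mC σ i) • A + (n - mC σ i) • B := by
  rw [Finset.sum_ite, Finset.sum_const, Finset.sum_const]
  congr 2
  · rw [mC_eq_filter]
  · rw [mC_eq_filter]
    have := Finset.card_filter_add_card_filter_not
      (s := (univ : Finset (Fin n))) (p := fun x => σ.SameCycle i x)
    simp only [Finset.card_univ, Fintype.card_fin] at this
    omega

lemma GG_le (m : ℕ) (i : Fin (m + 1)) :
    ∑ σ : Equiv.Perm (Fin (m + 1)), mC σ i * NN d σ ≤ (m + 1) * FF d (m + 1) := by
  rw [FF, Finset.mul_sum]
  apply Finset.sum_le_sum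
  intro σ _
  have h1 := mC_le σ i
  simp only [Fintype.card_fin] at h1
  exact Nat.mul_le_mul_right _ h1

lemma sub_sum (m : ℕ) (i : Fin (m + 1)) :
    ∑ σ : Equiv.Perm (Fin (m + 1)), ((m + 1) - mC σ i) * NN d σ
      = (m + 1) * FF d (m + 1) - GG d m := by
  have key : ∀ σ : Equiv.Perm (Fin (m + 1)),
      ((m + 1) - mC σ i) * NN d σ + mC σ i * NN d σ = (m + 1) * NN d σ := by
    intro σ
    have h1 := mC_le σ i
    simp only [Fintype.card_fin] at h1
    rw [← Nat.add_mul, Nat.sub_add_cancel h1]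
  have h2 : (∑ σ : Equiv.Perm (Fin (m + 1)), ((m + 1) - mC σ i) * NN d σ)
      + ∑ σ : Equiv.Perm (Fin (m + 1)), mC σ i * NN d σ
      = (m + 1) * FF d (m + 1) := by
    rw [← Finset.sum_add_distrib, Finset.sum_congr rfl (fun σ _ => key σ), FF, Finset.mul_sum]
  have h3 := base_indep d m i
  have h4 : GG d m = ∑ σ : Equiv.Perm (Fin (m + 1)), mC σ i * NN d σ := by rw [h3]; rfl
  omega

lemma FF_choose (m : ℕ) (hd : 0 < d) :
    FF d (m + 1) = (m + 1).factorial * (d + (m + 1) - 1).choose (m + 1) := by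
  rw [FF_closed]
  have h1 : ∀ k : ℕ, ∏ t ∈ Finset.range k, (d + t) = d.ascFactorial k := by
    intro k
    induction k with
    | zero => rw [Finset.prod_range_zero, Nat.ascFactorial_zero]
    | succ k ih => rw [Finset.prod_range_succ, Nat.ascFactorial_succ, ih, Nat.mul_comm]
  rw [h1, Nat.ascFactorial_eq_factorial_mul_choose']

lemma big_sum (hd : 0 < d) (m : ℕ) (i : Fin (m + 1)) (ρ : Matrix (Fin d) (Fin d) ℂ) :
    ∑ p : Fin (m + 1), ∑ σ : Equiv.Perm (Fin (m + 1)),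
        (if σ.SameCycle i p then ((NN d σ : ℂ) / d) • ρ
          else ((NN d σ : ℂ) / (d ^ 2)) • (ρ.trace • 1))
    = ((GG d m : ℂ) / d) • ρ
      + ((((m + 1) * FF d (m + 1) - GG d m : ℕ) : ℂ) / (d ^ 2)) •
          (ρ.trace • (1 : Matrix (Fin d) (Fin d) ℂ)) := by
  rw [Finset.sum_comm]
  rw [Finset.sum_congr rfl (fun σ _ => sum_ite_sc σ i _ _)]
  rw [Finset.sum_add_distrib]
  congr 1
  · have key : ∀ σ : Equiv.Perm (Fin (m + 1)),
        (mC σ i) • (((NN d σ : ℂ) / d) • ρ) = (((mC σ i * NN d σ : ℕ) : ℂ) / d) • ρ := by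
      intro σ
      rw [← Nat.cast_smul_eq_nsmul ℂ, smul_smul]
      congr 1
      push_cast
      ring
    rw [Finset.sum_congr rfl (fun σ _ => key σ), ← Finset.sum_smul]
    congr 1
    rw [← Finset.sum_div]
    congr 1
    rw [← Nat.cast_sum]
    have h3 := base_indep d m i
    have h4 : (∑ σ : Equiv.Perm (Fin (m + 1)), mC σ i * NN d σ) = GG d m := by rw [h3]; rfl
    exact_mod_cast congrArg Nat.cast h4
  · have key : ∀ σ : Equiv.Perm (Fin (m + 1)),
        ((m + 1) - mC σ i) • (((NN d σ : ℂ) / (d ^ 2)) • (ρ.trace • 1))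
        = (((((m + 1) - mC σ i) * NN d σ : ℕ) : ℂ) / (d ^ 2)) •
            (ρ.trace • (1 : Matrix (Fin d) (Fin d) ℂ)) := by
      intro σ
      rw [← Nat.cast_smul_eq_nsmul ℂ, smul_smul]
      rw [show (((m + 1 : ℕ) - mC σ i : ℕ) : ℂ) * ((NN d σ : ℂ) / (d ^ 2))
        = ((((m + 1) - mC σ i) * NN d σ : ℕ) : ℂ) / (d ^ 2) by push_cast; ring]
    rw [Finset.sum_congr rfl (fun σ _ => key σ), ← Finset.sum_smul]
    congr 1
    rw [← Finset.sum_div]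
    congr 1
    rw [← Nat.cast_sum, sub_sum m i]

end Assemble

end ClonerAux

open ClonerAux ClonerAux.MatrixPart

/-- The symmetric-subspace cloner is trace preserving, unitarily covariant under
`U ↦ U^{⊗n}`, and has single-site marginals `c_n ρ + (1−c_n) I/d` with
`c_n = (d+n)/(n(d+1))`. -/
theorem cloner_properties (n d : ℕ) [NeZero n] (hd : 0 < d) :
    (∀ ρ : Matrix (Fin d) (Fin d) ℂ, (cloner n d ρ).trace = ρ.trace) ∧
    (∀ U : Matrix (Fin d) (Fin d) ℂ, Uᴴ * U = 1 →
      ∀ ρ : Matrix (Fin d) (Fin d) ℂ,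
        cloner n d (uconj U ρ) = uconj (kronPow U) (cloner n d ρ)) ∧
    (∀ ρ : Matrix (Fin d) (Fin d) ℂ, IsState ρ → ∀ i : Fin n,
      siteMarginal i (cloner n d ρ)
        = (((d + n : ℝ) / (n * (d + 1)) : ℝ) : ℂ) • ρ +
          (((1 - (d + n : ℝ) / (n * (d + 1))) / d : ℝ) : ℂ) •
            (1 : Matrix (Fin d) (Fin d) ℂ)) := by
  classical
  obtain ⟨m, rfl⟩ : ∃ m, n = m + 1 :=
    ⟨n - 1, (Nat.succ_pred_eq_of_pos (Nat.pos_of_ne_zero (NeZero.ne n))).symm⟩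
  have hd0 : (d : ℂ) ≠ 0 := Nat.cast_ne_zero.mpr hd.ne'
  have hDpos : 0 < (d + (m + 1) - 1).choose (m + 1) := Nat.choose_pos (by omega)
  have hD0 : ((d + (m + 1) - 1).choose (m + 1) : ℂ) ≠ 0 := Nat.cast_ne_zero.mpr hDpos.ne'
  have hfac0 : ((m + 1).factorial : ℂ) ≠ 0 := Nat.cast_ne_zero.mpr (Nat.factorial_ne_zero _)
  have hfacm0 : (m.factorial : ℂ) ≠ 0 := Nat.cast_ne_zero.mpr (Nat.factorial_ne_zero _)
  have hFc : (FF d (m + 1) : ℂ)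
      = ((m + 1).factorial : ℂ) * ((d + (m + 1) - 1).choose (m + 1) : ℂ) := by
    exact_mod_cast congrArg Nat.cast (FF_choose m hd)
  have hGc : ((d : ℂ) + 1) * (GG d m : ℂ) = ((d : ℂ) + (m + 1)) * (FF d (m + 1) : ℂ) := by
    have h := congrArg (Nat.cast (R := ℂ)) (GG_closed d m)
    push_cast at h
    linear_combination h
  have hcloner : ∀ ρ : Matrix (Fin d) (Fin d) ℂ, cloner (m + 1) d ρ
      = ((d : ℂ) / ((d + (m + 1) - 1).choose (m + 1) : ℂ)) •
        (symProj (m + 1) d * siteOp (0 : Fin (m + 1)) ρ * symProj (m + 1) d) := by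
    intro ρ
    rw [cloner, firstSite_eq_siteOp]
  refine ⟨?_, ?_, ?_⟩
  · -- trace preservation
    intro ρ
    rw [hcloner, Matrix.trace_smul, Matrix.trace_mul_cycle, symProj_idem,
      ← trace_siteMarginal (0 : Fin (m + 1)) (symProj (m + 1) d * siteOp 0 ρ)]
    rw [show siteMarginal (0 : Fin (m + 1)) (symProj (m + 1) d * siteOp 0 ρ)
        = (((m + 1).factorial : ℂ))⁻¹ •
            ∑ σ : Equiv.Perm (Fin (m + 1)), ((NN d σ : ℂ) / d) • ρ from by
      rw [marg_symProj hd]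
      congr 1
      exact Finset.sum_congr rfl (fun σ _ => if_pos (Equiv.Perm.SameCycle.refl σ 0))]
    rw [Matrix.trace_smul, Matrix.trace_sum]
    rw [Finset.sum_congr rfl (fun σ _ => Matrix.trace_smul _ _)]
    simp only [smul_eq_mul]
    rw [← Finset.sum_mul, ← Finset.sum_div]
    have hsum : (∑ σ : Equiv.Perm (Fin (m + 1)), (NN d σ : ℂ)) = (FF d (m + 1) : ℂ) := by
      rw [FF]
      push_cast
      rfl
    rw [hsum, hFc]
    generalize hC : ((d + (m + 1) - 1).choose (m + 1) : ℂ) = C at hD0 ⊢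
    generalize hF : ((m + 1).factorial : ℂ) = F at hfac0 ⊢
    generalize ha : (d : ℂ) = a at hd0 ⊢
    field_simp
  · -- covariance
    intro U hU ρ
    have hU' : U * Uᴴ = 1 := mul_eq_one_comm.mp hU
    rw [hcloner, hcloner, ← kron_site_conj 0 U ρ hU']
    rw [uconj, kronPow_conjTranspose]
    rw [Matrix.mul_smul, Matrix.smul_mul]
    congr 1
    simp only [← mul_assoc]
    rw [symProj_kron_comm U]
    rw [mul_assoc (kronPow U * symProj (m + 1) d * siteOp 0 ρ) (kronPow Uᴴ) (symProj (m + 1) d)]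
    rw [← symProj_kron_comm Uᴴ]
    simp only [← mul_assoc]
  · -- marginal
    intro ρ hρ i
    rw [hcloner, sandwich, siteMarginal_smul, siteMarginal_smul, siteMarginal_sum]
    rw [Finset.sum_congr rfl (fun τ _ => marg_symProj hd i (τ 0) ρ)]
    rw [sum_perm_apply_zero m (fun p => (((m + 1).factorial : ℂ))⁻¹ •
      ∑ σ : Equiv.Perm (Fin (m + 1)),
        (if σ.SameCycle i p then ((NN d σ : ℂ) / d) • ρ
          else ((NN d σ : ℂ) / (d ^ 2)) • (ρ.trace • 1)))]
    rw [← Finset.smul_sum]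
    rw [big_sum hd m i ρ, hρ.2, one_smul]
    rw [← Nat.cast_smul_eq_nsmul ℂ (m.factorial)]
    simp only [smul_add, smul_smul]
    have hd1 : ((d : ℂ) + 1) ≠ 0 := by
      have h : ((d + 1 : ℕ) : ℂ) ≠ 0 := Nat.cast_ne_zero.mpr (Nat.succ_ne_zero d)
      push_cast at h
      exact h
    have hn0 : ((m : ℂ) + 1) ≠ 0 := by
      have h : ((m + 1 : ℕ) : ℂ) ≠ 0 := Nat.cast_ne_zero.mpr (Nat.succ_ne_zero m)
      push_cast at h
      exact h
    have hfs : ((m + 1).factorial : ℂ) = ((m : ℂ) + 1) * (m.factorial : ℂ) := by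
      rw [Nat.factorial_succ]
      push_cast
      ring
    have hGval : (GG d m : ℂ) = (((d : ℂ) + ((m : ℂ) + 1)) *
        (((m + 1).factorial : ℂ) * ((d + (m + 1) - 1).choose (m + 1) : ℂ))) / ((d : ℂ) + 1) := by
      rw [← hFc]
      rw [eq_div_iff hd1]
      linear_combination hGc
    have hle : GG d m ≤ (m + 1) * FF d (m + 1) := by
      rw [GG]
      exact GG_le m 0
    have hXc : (((m + 1) * FF d (m + 1) - GG d m : ℕ) : ℂ)
        = ((m : ℂ) + 1) * (FF d (m + 1) : ℂ) - (GG d m : ℂ) := by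
      rw [Nat.cast_sub hle]
      push_cast
      ring
    congr 1
    · congr 1
      rw [hGval, hfs]
      generalize hCg : ((d + (m + 1) - 1).choose (m + 1) : ℂ) = C at hD0 ⊢
      generalize hFm : (m.factorial : ℂ) = Fm at hfacm0 ⊢
      push_cast
      field_simp
    · congr 1
      rw [hXc, hFc, hGval, hfs]
      generalize hCg : ((d + (m + 1) - 1).choose (m + 1) : ℂ) = C at hD0 ⊢
      generalize hFm : (m.factorial : ℂ) = Fm at hfacm0 ⊢
      push_cast
      field_simp
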